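/- There is a language over a powerset alphabet that is monotone and FO-definable but not FO+-definable; namely K = (↑a↑b↑c)* + A*⊤A* over A = P({a,b,c}). Hence Lyndon's preservation theorem fails on finite words. -/

import Mathlib

/-- Componentwise extension of the order on the alphabet `A` to words. -/
def WordLe {A : Type} [PartialOrder A] (u v : List A) : Prop :=
  u.length = v.length ∧ ∀ (i : ℕ) (a b : A), u[i]? = some a → v[i]? = some b → a ≤ b

/-- A language is monotone if it is closed under componentwise replacement
of letters by larger ones. -/
def MonotoneLang {A : Type} [PartialOrder A] (L : Set (List A)) : Prop :=
  ∀ u v, WordLe u v → u ∈ L → v ∈ L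
/-- Syntax of positive first-order logic on words. -/
inductive FOp (A : Type) where
  | atom (a : A) (x : ℕ)
  | le (x y : ℕ)
  | lt (x y : ℕ)
  | and (φ ψ : FOp A)
  | or (φ ψ : FOp A)
  | ex (x : ℕ) (φ : FOp A)
  | all (x : ℕ) (φ : FOp A)

/-- Semantics of `FOp` formulas on words. -/
def FOp.Sat {A : Type} [PartialOrder A] (u : List A) (α : ℕ → ℕ) : FOp A → Prop
  | atom a x => ∃ b, u[α x]? = some b ∧ a ≤ b
  | le x y => α x ≤ α y
  | lt x y => α x < α y
  | and φ ψ => FOp.Sat u α φ ∧ FOp.Sat u α ψ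
  | or φ ψ => FOp.Sat u α φ ∨ FOp.Sat u α ψ
  | ex x φ => ∃ i, i < u.length ∧ FOp.Sat u (Function.update α x i) φ
  | all x φ => ∀ i, i < u.length → FOp.Sat u (Function.update α x i) φ

/-- Quantifier rank. -/
def FOp.qr {A : Type} : FOp A → ℕ
  | atom _ _ => 0
  | le _ _ => 0
  | lt _ _ => 0
  | and φ ψ => max φ.qr ψ.qr
  | or φ ψ => max φ.qr ψ.qr
  | ex _ φ => φ.qr + 1
  | all _ φ => φ.qr + 1

/-- Free variables. -/
def FOp.fv {A : Type} : FOp A → Finset ℕ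
  | atom _ x => {x}
  | le x y => {x, y}
  | lt x y => {x, y}
  | and φ ψ => φ.fv ∪ ψ.fv
  | or φ ψ => φ.fv ∪ ψ.fv
  | ex x φ => φ.fv.erase x
  | all x φ => φ.fv.erase x

/-- A language is FO⁺-definable if it is the set of words satisfying some
FO⁺ sentence. -/
def FOpDefinable {A : Type} [PartialOrder A] (L : Set (List A)) : Prop :=
  ∃ φ : FOp A, φ.fv = ∅ ∧ L = {u | FOp.Sat u (fun _ => 0) φ}
/-- Syntax of full first-order logic on words (with negation and exact
letter predicates). -/
inductive FOf (A : Type) where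
  | letter (a : A) (x : ℕ)
  | le (x y : ℕ)
  | lt (x y : ℕ)
  | not (φ : FOf A)
  | and (φ ψ : FOf A)
  | or (φ ψ : FOf A)
  | ex (x : ℕ) (φ : FOf A)
  | all (x : ℕ) (φ : FOf A)

/-- Semantics of `FOf` formulas on words. -/
def FOf.Sat {A : Type} (u : List A) (α : ℕ → ℕ) : FOf A → Prop
  | letter a x => u[α x]? = some a
  | le x y => α x ≤ α y
  | lt x y => α x < α y
  | not φ => ¬ FOf.Sat u α φ
  | and φ ψ => FOf.Sat u α φ ∧ FOf.Sat u α ψ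
  | or φ ψ => FOf.Sat u α φ ∨ FOf.Sat u α ψ
  | ex x φ => ∃ i, i < u.length ∧ FOf.Sat u (Function.update α x i) φ
  | all x φ => ∀ i, i < u.length → FOf.Sat u (Function.update α x i) φ

/-- Free variables. -/
def FOf.fv {A : Type} : FOf A → Finset ℕ
  | letter _ x => {x}
  | le x y => {x, y}
  | lt x y => {x, y}
  | not φ => φ.fv
  | and φ ψ => φ.fv ∪ ψ.fv
  | or φ ψ => φ.fv ∪ ψ.fv
  | ex x φ => φ.fv.erase x
  | all x φ => φ.fv.erase x

/-- A language is FO-definable if it is the set of words satisfying some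
FO sentence. -/
def FODefinable {A : Type} (L : Set (List A)) : Prop :=
  ∃ φ : FOf A, φ.fv = ∅ ∧ L = {u | FOf.Sat u (fun _ => 0) φ}
/-- The powerset alphabet `𝒫({a,b,c})`, ordered by inclusion. -/
abbrev AB : Type := Finset (Fin 3)

def la : AB := {0}
def lb : AB := {1}
def lc : AB := {2}
def top3 : AB := Finset.univ

/-- Words in `(↑a ↑b ↑c)*` : concatenations of three-letter blocks whose
letters contain `a`, `b`, `c` respectively. -/
inductive KBlocks : List AB → Prop
  | nil : KBlocks []
  | cons {s t r : AB} {w : List AB} :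
      (0 : Fin 3) ∈ s → (1 : Fin 3) ∈ t → (2 : Fin 3) ∈ r →
      KBlocks w → KBlocks (s :: t :: r :: w)

/-- The language `K = (↑a ↑b ↑c)* + A* ⊤ A*`. -/
def K : Set (List AB) := {u | KBlocks u ∨ top3 ∈ u}

/-!
On `⊤`-free words the phase `i % 3` of a position `i` can be read off the letters, which makes
`(↑a↑b↑c)*` first-order. At an anchor (the first position, or a letter that is not the rotation by
one of its predecessor) letters of size at most two pin the phase down locally, and along a run of
rotations by one the letter itself records, modulo 3, how far the run has advanced. Asking that
phases start at 0, increase by one, belong to the letters and end at 2 then defines `K`.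

`K` is not FO⁺-definable: `({a}{b}{c})^(3^k)` lies in `K`, the word of length `3^(k+1) + 1` whose
`i`-th letter is `{i - 1, i}` does not, and every letter of the first word lies below the letters
at the same and at the next position of the second. So Duplicator wins the `k`-round positive
Ehrenfeucht–Fraïssé game by matching positions left of a cut identically and positions right of
it with a shift by one, keeping a gap of `3^r` between the two sides while `r` rounds remain.
-/

open Fin.CommRing Function

def IsPhased (u : List AB) : Prop :=
  ∀ (i : ℕ) (s : AB), u[i]? = some s → (i : Fin 3) ∈ s

lemma isPhased_cons₃ {s t r : AB} {w : List AB} :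
    IsPhased (s :: t :: r :: w) ↔ 0 ∈ s ∧ 1 ∈ t ∧ 2 ∈ r ∧ IsPhased w := by
  have hcast (i : ℕ) : ((i + 3 : ℕ) : Fin 3) = i := by simp
  constructor
  · intro h
    refine ⟨h 0 s rfl, h 1 t rfl, h 2 r rfl, fun i x hx => ?_⟩
    simpa [hcast] using h (i + 3) x hx
  · rintro ⟨hs, ht, hr, hw⟩ i x hx
    match i with
    | 0 | 1 | 2 => simp_all
    | i + 3 => simpa [hcast] using hw i x hx

lemma KBlocks.dvd_length_and_isPhased {u : List AB} (h : KBlocks u) :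
    3 ∣ u.length ∧ IsPhased u := by
  induction h with
  | nil => exact ⟨dvd_zero 3, by simp [IsPhased]⟩
  | cons hs ht hr _ ih =>
    exact ⟨by simpa using ih.1, isPhased_cons₃.2 ⟨hs, ht, hr, ih.2⟩⟩

lemma KBlocks.of_isPhased : ∀ {u : List AB}, 3 ∣ u.length → IsPhased u → KBlocks u
  | [], _, _ => .nil
  | [_], h, _ | [_, _], h, _ => by norm_num at h
  | _ :: _ :: _ :: w, h3, hp => by
    obtain ⟨hs, ht, hr, hw⟩ := isPhased_cons₃.1 hp
    exact .cons hs ht hr (of_isPhased (by simpa using h3) hw)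

lemma kblocks_iff {u : List AB} : KBlocks u ↔ 3 ∣ u.length ∧ IsPhased u :=
  ⟨KBlocks.dvd_length_and_isPhased, fun h => .of_isPhased h.1 h.2⟩

lemma monotone_K : MonotoneLang K := by
  rintro u v ⟨hlen, hle⟩ (hK | hK)
  · rw [kblocks_iff] at hK
    refine Or.inl (kblocks_iff.2 ⟨hlen ▸ hK.1, fun i t ht => ?_⟩)
    obtain ⟨hi, -⟩ := List.getElem?_eq_some_iff.1 ht
    have hs : u[i]? = some u[i] := List.getElem?_eq_getElem (hlen ▸ hi)
    exact hle i _ _ hs ht (hK.2 i _ hs)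
  · right
    obtain ⟨i, hi, hget⟩ := List.getElem_of_mem hK
    have hi' : i < v.length := hlen ▸ hi
    have h := hle i _ _ (List.getElem?_eq_getElem hi) (List.getElem?_eq_getElem hi')
    rw [hget] at h
    have htop : v[i] = top3 := Finset.univ_subset_iff.1 h
    exact htop ▸ List.getElem_mem hi'

section PositiveGame

variable {A : Type} [PartialOrder A]

def AtomsPreserved (u v : List A) (α β : ℕ → ℕ) : Prop :=
  ∀ x, (∀ a, u[α x]? = some a → ∃ b, v[β x]? = some b ∧ a ≤ b) ∧
    ∀ y, (α x ≤ α y → β x ≤ β y) ∧ (α x < α y → β x < β y)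

/-- The `r`-round Ehrenfeucht–Fraïssé game for FO⁺: since there is no negation, letter atoms
only have to be preserved upwards, from `u` to `v`. -/
def DuplicatorWins (u v : List A) : ℕ → (ℕ → ℕ) → (ℕ → ℕ) → Prop
  | 0, α, β => AtomsPreserved u v α β
  | r + 1, α, β => AtomsPreserved u v α β ∧ ∀ x,
      (∀ i < u.length, ∃ j < v.length, DuplicatorWins u v r (update α x i) (update β x j)) ∧
      (∀ j < v.length, ∃ i < u.length, DuplicatorWins u v r (update α x i) (update β x j))

lemma DuplicatorWins.atomsPreserved {u v : List A} {r : ℕ} {α β : ℕ → ℕ}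
    (h : DuplicatorWins u v r α β) : AtomsPreserved u v α β := by
  cases r
  · exact h
  · exact h.1

theorem FOp.Sat.of_duplicatorWins {u v : List A} (φ : FOp A) {r : ℕ} {α β : ℕ → ℕ}
    (hwin : DuplicatorWins u v r α β) (hqr : φ.qr ≤ r) (h : φ.Sat u α) : φ.Sat v β := by
  induction φ generalizing r α β with
  | atom a x =>
    obtain ⟨b, hb, hab⟩ := h
    obtain ⟨c, hc, hbc⟩ := (hwin.atomsPreserved x).1 b hb
    exact ⟨c, hc, hab.trans hbc⟩
  | le x y => exact ((hwin.atomsPreserved x).2 y).1 h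
  | lt x y => exact ((hwin.atomsPreserved x).2 y).2 h
  | and φ ψ ihφ ihψ =>
    simp only [FOp.qr, max_le_iff] at hqr
    exact ⟨ihφ hwin hqr.1 h.1, ihψ hwin hqr.2 h.2⟩
  | or φ ψ ihφ ihψ =>
    simp only [FOp.qr, max_le_iff] at hqr
    exact h.imp (ihφ hwin hqr.1) (ihψ hwin hqr.2)
  | ex x φ ih =>
    obtain ⟨r, rfl⟩ : ∃ r', r = r' + 1 := ⟨r - 1, by simp only [FOp.qr] at hqr; omega⟩
    obtain ⟨i, hi, hφ⟩ := h
    obtain ⟨j, hj, hwin'⟩ := (hwin.2 x).1 i hi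
    exact ⟨j, hj, ih hwin' (by simpa [FOp.qr] using hqr) hφ⟩
  | all x φ ih =>
    obtain ⟨r, rfl⟩ : ∃ r', r = r' + 1 := ⟨r - 1, by simp only [FOp.qr] at hqr; omega⟩
    intro j hj
    obtain ⟨i, hi, hwin'⟩ := (hwin.2 x).2 j hj
    exact ih hwin' (by simpa [FOp.qr] using hqr) (h i hi)

end PositiveGame

section Split

/-- Position `i` of the short word corresponds to `j` of the long one when both sit left of the
cut `t₀`, or both sit right of `t₁`, where the long word is one letter ahead. -/
def SplitPair (t₀ t₁ i j : ℕ) : Prop := (i ≤ t₀ ∧ j = i) ∨ (t₁ ≤ i ∧ j = i + 1)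

def SplitAt (t₀ t₁ : ℕ) (α β : ℕ → ℕ) : Prop := ∀ x, SplitPair t₀ t₁ (α x) (β x)

lemma SplitPair.mono {t₀ t₁ t₀' t₁' i j : ℕ} (h : SplitPair t₀ t₁ i j) (h₀ : t₀ ≤ t₀')
    (h₁ : t₁' ≤ t₁) : SplitPair t₀' t₁' i j := by
  unfold SplitPair at *
  omega

lemma SplitAt.mono {t₀ t₁ t₀' t₁' : ℕ} {α β : ℕ → ℕ} (h : SplitAt t₀ t₁ α β) (h₀ : t₀ ≤ t₀')
    (h₁ : t₁' ≤ t₁) : SplitAt t₀' t₁' α β :=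
  fun x => (h x).mono h₀ h₁

lemma SplitAt.update {t₀ t₁ : ℕ} {α β : ℕ → ℕ} (h : SplitAt t₀ t₁ α β) (x : ℕ) {i j : ℕ}
    (hij : SplitPair t₀ t₁ i j) : SplitAt t₀ t₁ (update α x i) (update β x j) := by
  intro y
  by_cases hy : y = x
  · subst hy
    simpa using hij
  · simpa [update_of_ne hy] using h y

lemma exists_splitPair_forth {r t₀ t₁ : ℕ} (h : t₀ + 3 ^ (r + 1) ≤ t₁) (i : ℕ) :
    ∃ j t₀' t₁', t₀ ≤ t₀' ∧ t₁' ≤ t₁ ∧ t₀' + 3 ^ r ≤ t₁' ∧ SplitPair t₀' t₁' i j := by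
  have hpow : 3 ^ (r + 1) = 3 * 3 ^ r := pow_succ' 3 r
  by_cases hl : i ≤ t₀
  · exact ⟨i, t₀, t₁, le_rfl, le_rfl, by omega, .inl ⟨hl, rfl⟩⟩
  by_cases hr : t₁ ≤ i + 3 ^ r
  · exact ⟨i + 1, t₀, min i t₁, le_rfl, by omega, by omega, .inr ⟨by omega, rfl⟩⟩
  · exact ⟨i, i, t₁, by omega, le_rfl, by omega, .inl ⟨le_rfl, rfl⟩⟩

lemma exists_splitPair_back {r t₀ t₁ : ℕ} (h : t₀ + 3 ^ (r + 1) ≤ t₁) (j : ℕ) :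
    ∃ i t₀' t₁', t₀ ≤ t₀' ∧ t₁' ≤ t₁ ∧ t₀' + 3 ^ r ≤ t₁' ∧ SplitPair t₀' t₁' i j := by
  have hpow : 3 ^ (r + 1) = 3 * 3 ^ r := pow_succ' 3 r
  by_cases hl : j ≤ t₀
  · exact ⟨j, t₀, t₁, le_rfl, le_rfl, by omega, .inl ⟨hl, rfl⟩⟩
  by_cases hr : t₁ < j + 3 ^ r
  · exact ⟨j - 1, t₀, min (j - 1) t₁, le_rfl, by omega, by omega, .inr ⟨by omega, by omega⟩⟩
  · exact ⟨j, j, t₁, by omega, le_rfl, by omega, .inl ⟨le_rfl, rfl⟩⟩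

variable {A : Type} [PartialOrder A] {u v : List A}

lemma atomsPreserved_of_splitAt (hlen : v.length = u.length + 1)
    (hdom : ∀ i (hi : i < u.length), u[i] ≤ v[i] ∧ u[i] ≤ v[i + 1])
    {t₀ t₁ : ℕ} {α β : ℕ → ℕ} (hgap : t₀ < t₁) (h : SplitAt t₀ t₁ α β) :
    AtomsPreserved u v α β := by
  intro x
  refine ⟨fun a ha => ?_, fun y => ?_⟩
  · obtain ⟨hi, rfl⟩ := List.getElem?_eq_some_iff.1 ha
    rcases h x with ⟨-, hx⟩ | ⟨-, hx⟩ <;> simp only [hx]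
    exacts [⟨_, List.getElem?_eq_getElem (by omega), (hdom _ hi).1⟩,
      ⟨_, List.getElem?_eq_getElem (by omega), (hdom _ hi).2⟩]
  · have := h x
    have := h y
    unfold SplitPair at *
    omega

theorem duplicatorWins_of_splitAt (hlen : v.length = u.length + 1)
    (hdom : ∀ i (hi : i < u.length), u[i] ≤ v[i] ∧ u[i] ≤ v[i + 1]) :
    ∀ {r t₀ t₁ : ℕ} {α β : ℕ → ℕ}, t₀ + 3 ^ r ≤ t₁ → t₁ ≤ u.length → SplitAt t₀ t₁ α β →
      DuplicatorWins u v r α β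
  | 0, _, _, _, _, hgap, _, h => atomsPreserved_of_splitAt hlen hdom (by omega) h
  | r + 1, t₀, t₁, α, β, hgap, ht₁, h => by
    have hpos := Nat.one_le_pow r 3 (by norm_num)
    refine ⟨atomsPreserved_of_splitAt hlen hdom (by omega) h, fun x => ⟨fun i hi => ?_, fun j hj => ?_⟩⟩
    · obtain ⟨j, t₀', t₁', h₀, h₁, hgap', hij⟩ := exists_splitPair_forth hgap i
      refine ⟨j, ?_, duplicatorWins_of_splitAt hlen hdom hgap' (by omega)
        ((h.mono h₀ h₁).update x hij)⟩
      unfold SplitPair at hij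
      omega
    · obtain ⟨i, t₀', t₁', h₀, h₁, hgap', hij⟩ := exists_splitPair_back hgap j
      refine ⟨i, ?_, duplicatorWins_of_splitAt hlen hdom hgap' (by omega)
        ((h.mono h₀ h₁).update x hij)⟩
      unfold SplitPair at hij
      omega

end Split

def phaseWord (n : ℕ) : List AB := List.ofFn fun i : Fin n => {((i : ℕ) : Fin 3)}

def blurredPhaseWord (n : ℕ) : List AB :=
  List.ofFn fun i : Fin (n + 1) => {((i : ℕ) : Fin 3) - 1, ((i : ℕ) : Fin 3)}

@[simp] lemma length_phaseWord (n : ℕ) : (phaseWord n).length = n := List.length_ofFn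

@[simp] lemma length_blurredPhaseWord (n : ℕ) : (blurredPhaseWord n).length = n + 1 :=
  List.length_ofFn

lemma phaseWord_mem_K (k : ℕ) : phaseWord (3 * k) ∈ K := by
  refine Or.inl (kblocks_iff.2 ⟨by simp, fun i s hs => ?_⟩)
  obtain ⟨hi, rfl⟩ := List.getElem?_eq_some_iff.1 hs
  simp [phaseWord]

lemma blurredPhaseWord_not_mem_K (k : ℕ) : blurredPhaseWord (3 * k) ∉ K := by
  rintro (h | h)
  · have := (kblocks_iff.1 h).1
    simp only [length_blurredPhaseWord] at this
    omega
  · obtain ⟨i, hi⟩ := List.mem_ofFn.1 h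
    have : ∀ x : Fin 3, ({x - 1, x} : AB) ≠ top3 := by decide
    exact this _ hi

lemma phaseWord_le_blurredPhaseWord {n i : ℕ} (hi : i < (phaseWord n).length) :
    (phaseWord n)[i] ≤ (blurredPhaseWord n)[i]'(by simp_all; omega) ∧
      (phaseWord n)[i] ≤ (blurredPhaseWord n)[i + 1]'(by simp_all) := by
  simp only [phaseWord, blurredPhaseWord, List.getElem_ofFn]
  simp

theorem not_fOpDefinable_K : ¬ FOpDefinable K := by
  rintro ⟨φ, -, hK⟩
  set k := φ.qr
  have hwin : DuplicatorWins (phaseWord (3 * 3 ^ k)) (blurredPhaseWord (3 * 3 ^ k)) k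
      (fun _ => 0) (fun _ => 0) :=
    duplicatorWins_of_splitAt (t₀ := 0) (t₁ := 3 * 3 ^ k) (by simp)
      (fun _ => phaseWord_le_blurredPhaseWord) (by omega) (by simp) fun _ => .inl ⟨le_rfl, rfl⟩
  have hu : phaseWord (3 * 3 ^ k) ∈ {u | φ.Sat u fun _ => 0} := hK ▸ phaseWord_mem_K (3 ^ k)
  exact blurredPhaseWord_not_mem_K (3 ^ k) (hK ▸ FOp.Sat.of_duplicatorWins φ hwin le_rfl hu)

def rot (e : Fin 3) (s : AB) : AB := s.image (· + e)

@[simp] lemma rot_zero (s : AB) : rot 0 s = s := by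
  simp [rot]

lemma rot_rot (d e : Fin 3) (s : AB) : rot e (rot d s) = rot (d + e) s := by
  simp only [rot, Finset.image_image, Function.comp_def, add_assoc]

lemma rot_left_injective {s : AB} (h₀ : s ≠ ∅) (h₁ : s ≠ top3) : Injective (rot · s) := by
  revert s
  decide

/-- A letter that is not a rotation of its predecessor pins down the phase. -/
lemma eq_of_ne_rot_one {s t : AB} (hs : s ≠ top3) (ht : t ≠ top3) (hst : t ≠ rot 1 s) {p q : Fin 3}
    (hp : p - 1 ∈ s ∧ p ∈ t) (hq : q - 1 ∈ s ∧ q ∈ t) : p = q := by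
  revert s t p q
  decide

def LetterRel {A : Type} (u : List A) (R : A → A → Prop) (i j : ℕ) : Prop :=
  ∃ s t, u[i]? = some s ∧ u[j]? = some t ∧ R s t

def IsShiftStep (u : List AB) (z : ℕ) : Prop :=
  ∃ w, z = w + 1 ∧ LetterRel u (fun s t => t = rot 1 s) w z

def IsShiftChain (u : List AB) (y x : ℕ) : Prop :=
  ∀ z, y < z → z ≤ x → IsShiftStep u z

def IsAnchor (u : List AB) (q : Fin 3) (y : ℕ) : Prop :=
  (q = 0 ∧ y = 0) ∨ ∃ w, y = w + 1 ∧ LetterRel u (fun s t => t ≠ rot 1 s ∧ q - 1 ∈ s ∧ q ∈ t) w y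

/-- `x` is reached from an anchor `y` of phase `j - e` by a chain of rotations by one, and the
letter at `x` is the one at `y` rotated by `e`: the letters record the distance `x - y` modulo 3,
which first-order logic cannot count. -/
def HasPhase (u : List AB) (j : Fin 3) (x : ℕ) : Prop :=
  ∃ y ≤ x, IsShiftChain u y x ∧
    ∃ e : Fin 3, LetterRel u (fun s t => t = rot e s) y x ∧ IsAnchor u (j - e) y

lemma IsShiftChain.getElem?_eq {u : List AB} {y x : ℕ} {s : AB} (hs : u[y]? = some s)
    (hyx : y ≤ x) (h : IsShiftChain u y x) (hx : x < u.length) :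
    u[x]? = some (rot ((x - y : ℕ) : Fin 3) s) := by
  induction x, hyx using Nat.le_induction with
  | base => simpa using hs
  | succ x hyx ih =>
    obtain ⟨w, hw, s', t, hs', ht, rfl⟩ := h (x + 1) (by omega) le_rfl
    obtain rfl : w = x := by omega
    rw [ih (fun z h₁ h₂ => h z h₁ (by omega)) (by omega)] at hs'
    rw [ht, ← Option.some_inj.1 hs', rot_rot, Nat.sub_add_comm hyx]
    push_cast
    rfl

lemma exists_maximal_isShiftChain (u : List AB) (x : ℕ) :
    ∃ y ≤ x, IsShiftChain u y x ∧ (y = 0 ∨ ¬ IsShiftStep u y) := by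
  induction x with
  | zero => exact ⟨0, le_rfl, fun z h₁ h₂ => by omega, .inl rfl⟩
  | succ x ih =>
    by_cases hstep : IsShiftStep u (x + 1)
    · obtain ⟨y, hyx, hchain, hy⟩ := ih
      refine ⟨y, by omega, fun z h₁ h₂ => ?_, hy⟩
      rcases Nat.lt_or_ge x z with hz | hz
      · obtain rfl : z = x + 1 := by omega
        exact hstep
      · exact hchain z h₁ hz
    · exact ⟨x + 1, le_rfl, fun z h₁ h₂ => by omega, .inr hstep⟩

section Phase

variable {u : List AB} {j : Fin 3} {x : ℕ}

lemma HasPhase.natCast_eq (hp : IsPhased u) (htop : top3 ∉ u) (h : HasPhase u j x)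
    (hx : x < u.length) : (x : Fin 3) = j := by
  have hne_top {i : ℕ} {s : AB} (hs : u[i]? = some s) : s ≠ top3 := by
    rintro rfl
    exact htop (List.mem_of_getElem? hs)
  obtain ⟨y, hyx, hchain, e, ⟨s, t, hs, ht, rfl⟩, hanchor⟩ := h
  have hrot : rot ((x - y : ℕ) : Fin 3) s = rot e s := by
    rw [← Option.some_inj, ← ht, hchain.getElem?_eq hs hyx hx]
  have he : (x : Fin 3) - y = e := by
    rw [← Nat.cast_sub hyx]
    exact rot_left_injective (Finset.ne_empty_of_mem (hp y s hs)) (hne_top hs) hrot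
  suffices hy : (y : Fin 3) = j - e by linear_combination he + hy
  rcases hanchor with ⟨hq, rfl⟩ | ⟨w, rfl, s', t', hs', ht', hne, hq⟩
  · simpa using hq.symm
  · obtain rfl : t' = s := Option.some_inj.1 (ht'.symm.trans hs)
    refine eq_of_ne_rot_one (hne_top hs') (hne_top hs) hne ⟨?_, hp _ _ hs⟩ hq
    simpa using hp w s' hs'

lemma hasPhase_of_natCast_eq (hp : IsPhased u) (hx : x < u.length) (hj : (x : Fin 3) = j) :
    HasPhase u j x := by
  obtain ⟨y, hyx, hchain, hy⟩ := exists_maximal_isShiftChain u x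
  obtain ⟨s, hs⟩ : ∃ s, u[y]? = some s := ⟨_, List.getElem?_eq_getElem (by omega)⟩
  have hjy : j - ((x - y : ℕ) : Fin 3) = y := by
    rw [Nat.cast_sub hyx, ← hj, sub_sub_cancel]
  refine ⟨y, hyx, hchain, _, ⟨s, _, hs, hchain.getElem?_eq hs hyx hx, rfl⟩, ?_⟩
  rw [hjy]
  obtain rfl | ⟨w, rfl⟩ : y = 0 ∨ ∃ w, y = w + 1 := by cases y <;> simp
  · exact .inl ⟨Nat.cast_zero, rfl⟩
  · have hstep : ¬ IsShiftStep u (w + 1) := hy.resolve_left (by omega)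
    obtain ⟨t, ht⟩ : ∃ t, u[w]? = some t := ⟨_, List.getElem?_eq_getElem (by omega)⟩
    refine .inr ⟨w, rfl, t, s, ht, hs, fun h => hstep ⟨w, rfl, t, s, ht, hs, h⟩, ?_, hp _ _ hs⟩
    simpa using hp w t ht

theorem hasPhase_iff (hp : IsPhased u) (htop : top3 ∉ u) (hx : x < u.length) :
    HasPhase u j x ↔ (x : Fin 3) = j :=
  ⟨fun h => h.natCast_eq hp htop hx, hasPhase_of_natCast_eq hp hx⟩

end Phase

/-- Local rules forcing a family of predicates `Φ j` to mark exactly the positions of phase `j`. -/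
def PhaseRules (u : List AB) (Φ : Fin 3 → ℕ → Prop) : Prop :=
  ∀ x (hx : x < u.length), (x = 0 → Φ 0 x) ∧ (x + 1 = u.length → ¬ Φ 0 x ∧ ¬ Φ 1 x) ∧
    (∀ j, Φ j x → j ∈ u[x]) ∧ ∀ y < u.length, y = x + 1 → ∀ j, Φ j x → Φ (j + 1) y

section PhaseRules

variable {u : List AB} {Φ : Fin 3 → ℕ → Prop}

lemma PhaseRules.natCast_self (h : PhaseRules u Φ) {x : ℕ} (hx : x < u.length) :
    Φ x x := by
  induction x with
  | zero => exact (h 0 hx).1 rfl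
  | succ x ih => exact_mod_cast (h x (by omega)).2.2.2 (x + 1) hx rfl _ (ih (by omega))

lemma PhaseRules.dvd_length_and_isPhased (h : PhaseRules u Φ) : 3 ∣ u.length ∧ IsPhased u := by
  refine ⟨?_, fun i s hs => ?_⟩
  · obtain hu | hu := Nat.eq_zero_or_pos u.length
    · simp [hu]
    have hlast := (h (u.length - 1) (by omega)).2.1 (by omega)
    have hΦ := h.natCast_self (x := u.length - 1) (by omega)
    have h0 : ((u.length - 1 : ℕ) : Fin 3) ≠ 0 := fun h0 => hlast.1 (h0 ▸ hΦ)
    have h1 : ((u.length - 1 : ℕ) : Fin 3) ≠ 1 := fun h1 => hlast.2 (h1 ▸ hΦ)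
    simp only [ne_eq, Fin.ext_iff, Fin.val_natCast] at h0 h1
    omega
  · obtain ⟨hi, rfl⟩ := List.getElem?_eq_some_iff.1 hs
    exact (h i hi).2.2.1 _ (h.natCast_self hi)

lemma phaseRules_of_isPhased (h3 : 3 ∣ u.length) (hp : IsPhased u)
    (hΦ : ∀ j x, x < u.length → (Φ j x ↔ (x : Fin 3) = j)) : PhaseRules u Φ := by
  intro x hx
  simp only [hΦ _ x hx]
  refine ⟨fun h => by simp [h], fun h => ?_, fun j hj => ?_, fun y hy hxy j hj => ?_⟩
  · simp only [Fin.ext_iff, Fin.val_natCast]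
    omega
  · exact hj ▸ hp x _ (List.getElem?_eq_getElem hx)
  · rw [hΦ _ y hy, hxy, ← hj]
    push_cast
    rfl

end PhaseRules

theorem mem_K_iff {u : List AB} : u ∈ K ↔ top3 ∈ u ∨ PhaseRules u (HasPhase u) := by
  refine ⟨fun hu => ?_, fun hu => ?_⟩
  · by_cases htop : top3 ∈ u
    · exact .inl htop
    obtain ⟨h3, hp⟩ := kblocks_iff.1 (hu.resolve_right htop)
    exact .inr (phaseRules_of_isPhased h3 hp fun j x hx => hasPhase_iff hp htop hx)
  · rcases hu with htop | hrules
    · exact .inr htop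
    · exact .inl (kblocks_iff.2 hrules.dvd_length_and_isPhased)

namespace FOf

variable {A : Type}

def imp (φ ψ : FOf A) : FOf A := .or (.not φ) ψ

def falsum : FOf A := .ex 0 (.lt 0 0)

def anyOf (l : List (FOf A)) : FOf A := l.foldr .or falsum

def allOf (l : List (FOf A)) : FOf A := .not (anyOf (l.map .not))

def letterIn (l : List A) (P : A → Prop) [DecidablePred P] (x : ℕ) : FOf A :=
  anyOf ((l.filter (P ·)).map (.letter · x))

def letterRel (l : List A) (R : A → A → Prop) [DecidableRel R] (x y : ℕ) : FOf A :=
  anyOf (l.flatMap fun a => (l.filter (R a ·)).map fun b => .and (.letter a x) (.letter b y))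

def succ (x y v : ℕ) : FOf A := .and (.lt x y) (.not (.ex v (.and (.lt x v) (.lt v y))))

def first (x v : ℕ) : FOf A := .not (.ex v (.lt v x))

def last (x v : ℕ) : FOf A := .not (.ex v (.lt x v))

variable {u : List A} {α : ℕ → ℕ}

@[simp] lemma sat_imp {φ ψ : FOf A} : (imp φ ψ).Sat u α ↔ (φ.Sat u α → ψ.Sat u α) := by
  simp only [imp, Sat]
  tauto

@[simp] lemma sat_anyOf {l : List (FOf A)} : (anyOf l).Sat u α ↔ ∃ φ ∈ l, φ.Sat u α := by
  induction l with
  | nil => simp [anyOf, falsum, Sat]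
  | cons φ l ih => simp [anyOf, Sat, ← ih]

@[simp] lemma sat_allOf {l : List (FOf A)} : (allOf l).Sat u α ↔ ∀ φ ∈ l, φ.Sat u α := by
  simp [allOf, Sat]

lemma sat_letterIn {l : List A} (hl : ∀ a, a ∈ l) {P : A → Prop} [DecidablePred P] {x : ℕ} :
    (letterIn l P x).Sat u α ↔ ∃ a, u[α x]? = some a ∧ P a := by
  simp [letterIn, Sat, hl, and_comm]

lemma sat_letterRel {l : List A} (hl : ∀ a, a ∈ l) {R : A → A → Prop} [DecidableRel R]
    {x y : ℕ} : (letterRel l R x y).Sat u α ↔ LetterRel u R (α x) (α y) := by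
  simp only [letterRel, sat_anyOf, List.mem_flatMap, hl, List.mem_map, List.mem_filter,
    decide_eq_true_eq, true_and, ↓existsAndEq, and_true, Sat]
  exact ⟨fun ⟨a, b, h, ha, hb⟩ => ⟨a, b, ha, hb, h⟩, fun ⟨a, b, ha, hb, h⟩ => ⟨a, b, h, ha, hb⟩⟩

lemma sat_succ {x y v : ℕ} (hx : x ≠ v) (hy : y ≠ v) (hyu : α y < u.length) :
    (succ x y v : FOf A).Sat u α ↔ α y = α x + 1 := by
  simp only [succ, Sat, update_self, update_of_ne hx, update_of_ne hy]
  constructor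
  · rintro ⟨h₁, h₂⟩
    by_contra hne
    exact h₂ ⟨α x + 1, by omega, by omega, by omega⟩
  · rintro h
    exact ⟨by omega, fun ⟨i, _, h₁, h₂⟩ => by omega⟩

lemma sat_first {x v : ℕ} (hx : x ≠ v) (hxu : α x < u.length) :
    (first x v : FOf A).Sat u α ↔ α x = 0 := by
  simp only [first, Sat, update_self, update_of_ne hx]
  exact ⟨fun h => by by_contra h0; exact h ⟨0, by omega, by omega⟩, fun h ⟨i, _, hi⟩ => by omega⟩

lemma sat_last {x v : ℕ} (hx : x ≠ v) (hxu : α x < u.length) :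
    (last x v : FOf A).Sat u α ↔ α x + 1 = u.length := by
  simp only [last, Sat, update_self, update_of_ne hx]
  exact ⟨fun h => by by_contra h0; exact h ⟨α x + 1, by omega, by omega⟩,
    fun h ⟨i, hi, hxi⟩ => by omega⟩

end FOf

def letters : List AB := [∅, {0}, {1}, {2}, {0, 1}, {0, 2}, {1, 2}, Finset.univ]

lemma mem_letters (s : AB) : s ∈ letters := by
  revert s
  decide

lemma exists_lt_length_letterRel_iff {A : Type} {u : List A} {R : A → A → Prop} {y : ℕ} :
    (∃ w < u.length, y = w + 1 ∧ LetterRel u R w y) ↔ ∃ w, y = w + 1 ∧ LetterRel u R w y :=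
  ⟨fun ⟨w, _, hw⟩ => ⟨w, hw⟩,
    fun ⟨w, hw, s, t, hs, ht⟩ => ⟨w, (List.getElem?_eq_some_iff.1 hs).1, hw, s, t, hs, ht⟩⟩

section PhaseFormulas

/-! Variable `2` holds the anchor, `3` runs along the shift chain, `4` is a predecessor and `5`
is scratch. -/

def shiftStepF : FOf AB :=
  .ex 4 (.and (.succ 4 3 5) (.letterRel letters (fun s t => t = rot 1 s) 4 3))

def shiftChainF (x : ℕ) : FOf AB := .all 3 (.imp (.and (.lt 2 3) (.le 3 x)) shiftStepF)

def anchorF (q : Fin 3) : FOf AB :=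
  .or (if q = 0 then .first 2 5 else .falsum)
    (.ex 4 (.and (.succ 4 2 5) (.letterRel letters (fun s t => t ≠ rot 1 s ∧ q - 1 ∈ s ∧ q ∈ t) 4 2)))

def phaseF (j : Fin 3) (x : ℕ) : FOf AB :=
  .ex 2 (.and (.le 2 x) (.and (shiftChainF x) (.anyOf ((List.finRange 3).map fun e =>
    .and (.letterRel letters (fun s t => t = rot e s) 2 x) (anchorF (j - e))))))

variable {u : List AB} {α : ℕ → ℕ}

lemma sat_shiftStepF (h : α 3 < u.length) : shiftStepF.Sat u α ↔ IsShiftStep u (α 3) := by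
  simp [shiftStepF, FOf.Sat, FOf.sat_letterRel mem_letters, FOf.sat_succ, h, IsShiftStep,
    exists_lt_length_letterRel_iff]

lemma sat_shiftChainF {x : ℕ} (hx3 : x ≠ 3) (hx : α x < u.length) :
    (shiftChainF x).Sat u α ↔ IsShiftChain u (α 2) (α x) := by
  simp +contextual only [shiftChainF, FOf.Sat, FOf.sat_imp, ne_eq, Nat.reduceEqDiff,
    not_false_eq_true, update_of_ne, update_self, hx3, sat_shiftStepF, and_imp, IsShiftChain]
  exact ⟨fun h z h₁ h₂ => h z (by omega) h₁ h₂, fun h z _ => h z⟩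

lemma sat_anchorF {q : Fin 3} (h : α 2 < u.length) : (anchorF q).Sat u α ↔ IsAnchor u q (α 2) := by
  simp only [anchorF, ne_eq, FOf.Sat, Nat.reduceEqDiff, not_false_eq_true, update_of_ne, h,
    FOf.sat_succ, update_self, FOf.sat_letterRel mem_letters, exists_lt_length_letterRel_iff, IsAnchor]
  split_ifs with hq <;> simp [hq, FOf.sat_first, FOf.falsum, FOf.Sat, h]

lemma sat_phaseF {j : Fin 3} {x : ℕ} (hx2 : x ≠ 2) (hx3 : x ≠ 3) (hx : α x < u.length) :
    (phaseF j x).Sat u α ↔ HasPhase u j (α x) := by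
  have hsub : ∀ i < u.length, ((shiftChainF x).Sat u (update α 2 i) ↔ IsShiftChain u i (α x)) ∧
      ∀ q, ((anchorF q).Sat u (update α 2 i) ↔ IsAnchor u q i) := fun i hi =>
    ⟨by rw [sat_shiftChainF hx3 (by rwa [update_of_ne hx2]), update_self, update_of_ne hx2],
      fun q => by rw [sat_anchorF (by rwa [update_self]), update_self]⟩
  simp only [phaseF, FOf.Sat, update_self, ne_eq, hx2, not_false_eq_true, update_of_ne,
    FOf.sat_anyOf, List.mem_map, List.mem_finRange, true_and, exists_exists_eq_and,
    FOf.sat_letterRel mem_letters, HasPhase]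
  constructor
  · rintro ⟨y, hy, hyx, hchain, e, hrel, hanchor⟩
    exact ⟨y, hyx, (hsub y hy).1.1 hchain, e, hrel, ((hsub y hy).2 _).1 hanchor⟩
  · rintro ⟨y, hyx, hchain, e, hrel, hanchor⟩
    exact ⟨y, by omega, hyx, (hsub y (by omega)).1.2 hchain, e, hrel, ((hsub y (by omega)).2 _).2 hanchor⟩

def kSentence : FOf AB :=
  .or (.ex 0 (.letter top3 0)) (.all 0 (.and (.imp (.first 0 1) (phaseF 0 0))
    (.and (.imp (.last 0 1) (.and (.not (phaseF 0 0)) (.not (phaseF 1 0))))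
    (.and (.allOf ((List.finRange 3).map fun j => .imp (phaseF j 0) (.letterIn letters (j ∈ ·) 0)))
      (.all 1 (.imp (.succ 0 1 2)
        (.allOf ((List.finRange 3).map fun j => .imp (phaseF j 0) (phaseF (j + 1) 1)))))))))

lemma sat_kSentence : kSentence.Sat u α ↔ top3 ∈ u ∨ PhaseRules u (HasPhase u) := by
  have htop : (∃ i < u.length, u[i]? = some top3) ↔ top3 ∈ u :=
    ⟨fun ⟨i, _, h⟩ => List.mem_of_getElem? h, fun h =>
      let ⟨i, hi⟩ := List.mem_iff_getElem?.1 h; ⟨i, (List.getElem?_eq_some_iff.1 hi).1, hi⟩⟩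
  simp only [kSentence, FOf.Sat, update_self]
  refine or_congr htop (forall₂_congr fun x hx => ?_)
  have hφ₀ : ∀ j, (phaseF j 0).Sat u (update α 0 x) ↔ HasPhase u j x := fun j => by
    rw [sat_phaseF (by decide) (by decide) (by rwa [update_self]), update_self]
  have hφ₀' : ∀ y j, (phaseF j 0).Sat u (update (update α 0 x) 1 y) ↔ HasPhase u j x := fun y j => by
    rw [sat_phaseF (by decide) (by decide) (by simpa using hx)]
    simp
  have hφ₁ : ∀ y < u.length, ∀ j, (phaseF j 1).Sat u (update (update α 0 x) 1 y) ↔ HasPhase u j y :=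
    fun y hy j => by rw [sat_phaseF (by decide) (by decide) (by simpa using hy), update_self]
  have hsucc : ∀ y < u.length, (FOf.succ 0 1 2).Sat u (update (update α 0 x) 1 y) ↔ y = x + 1 :=
    fun y hy => by
      rw [FOf.sat_succ (by decide) (by decide) (by rwa [update_self]), update_self,
        update_of_ne (by decide), update_self]
  simp only [FOf.sat_imp, ne_eq, zero_ne_one, not_false_eq_true, update_self, hx, FOf.sat_first,
    hφ₀, FOf.sat_last, FOf.Sat, FOf.sat_allOf, List.mem_map, List.mem_finRange, true_and,
    forall_exists_index, forall_apply_eq_imp_iff, FOf.sat_letterIn mem_letters, getElem?_pos,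
    Option.some.injEq, exists_eq_left', hφ₀', and_congr_right_iff]
  exact fun _ _ _ => forall₂_congr fun y hy => by simp only [hsucc y hy, hφ₁ y hy]

end PhaseFormulas

theorem fODefinable_K : FODefinable K :=
  ⟨kSentence, by decide, Set.ext fun _ => mem_K_iff.trans sat_kSentence.symm⟩

/-- there is a language over a powerset alphabet that is
monotone and FO-definable but not FO⁺-definable, namely
`K = (↑a↑b↑c)* + A*⊤A*` over `A = 𝒫({a,b,c})`. Hence Lyndon's preservation
theorem fails on finite words. -/
theorem lyndon_fails_on_words :
    MonotoneLang K ∧ FODefinable K ∧ ¬ FOpDefinable K := by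
  exact ⟨monotone_K, fODefinable_K, not_fOpDefinable_K⟩
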